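/- arXiv:1408.5728 — 2 statements merged into one kernel-verified Lean document; each statement's English description precedes it below -/
import Mathlib

section
/- Let U ∈ U(n). There exist diagonal unitary matrices L, R with (L U R) having all row and column sums equal to 1 if and only if there exists a vector φ ∈ ℂⁿ with |φ_i| = 1 for all i such that |(Uφ)_i| = 1 for all i. -/
/-! Write `L = diagonal a` and `R = diagonal φ`. The row sums of `L U R` are `aᵢ (U φ)ᵢ`, so
row sums equal to 1 with `|aᵢ| = 1` force `|(U φ)ᵢ| = 1`. Conversely, for `ψ = U φ` unimodular
take `a = ψ̄`: the row sums become `|ψᵢ|² = 1`, and since `ψ̄ U = conj (U* ψ) = φ̄` by unitarity,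
the column sums become `|φⱼ|² = 1`. -/

open Matrix

theorem RCLike.star_mul_self_eq_one_iff {𝕜 : Type*} [RCLike 𝕜] {z : 𝕜} :
    star z * z = 1 ↔ ‖z‖ = 1 := by
  rw [RCLike.star_def, RCLike.conj_mul, ← RCLike.ofReal_pow, ← RCLike.ofReal_one,
    RCLike.ofReal_inj, pow_eq_one_iff_of_nonneg (norm_nonneg z) two_ne_zero]

namespace Matrix

variable {n : Type*} [Fintype n]

theorem diagonal_mem_unitaryGroup_iff {𝕜 : Type*} [RCLike 𝕜] [DecidableEq n] {d : n → 𝕜} :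
    diagonal d ∈ unitaryGroup n 𝕜 ↔ ∀ i, ‖d i‖ = 1 := by
  rw [mem_unitaryGroup_iff', star_eq_conjTranspose, diagonal_conjTranspose,
    diagonal_mul_diagonal, ← diagonal_one, diagonal_injective.eq_iff, funext_iff]
  exact forall_congr' fun i => RCLike.star_mul_self_eq_one_iff

variable {α : Type*}

theorem sum_diagonal_mul_mul_diagonal_row [Semiring α] [DecidableEq n]
    (a b : n → α) (U : Matrix n n α) (i : n) :
    ∑ j, (diagonal a * U * diagonal b) i j = a i * (U *ᵥ b) i := by
  simp only [mul_diagonal, diagonal_mul, mulVec, dotProduct, Finset.mul_sum, mul_assoc]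

theorem sum_diagonal_mul_mul_diagonal_col [Semiring α] [DecidableEq n]
    (a b : n → α) (U : Matrix n n α) (j : n) :
    ∑ i, (diagonal a * U * diagonal b) i j = (a ᵥ* U) j * b j := by
  simp only [mul_diagonal, diagonal_mul, vecMul, dotProduct, Finset.sum_mul]

theorem star_mulVec_vecMul_of_mem_unitaryGroup [CommRing α] [StarRing α] [DecidableEq n]
    {U : Matrix n n α} (hU : U ∈ unitaryGroup n α) (φ : n → α) :
    star (U *ᵥ φ) ᵥ* U = star φ := by
  rw [star_mulVec, vecMul_vecMul, ← star_eq_conjTranspose, mem_unitaryGroup_iff'.mp hU,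
    vecMul_one]

end Matrix

theorem stmt_3 (n : ℕ) (U : Matrix (Fin n) (Fin n) ℂ)
    (hU : U ∈ Matrix.unitaryGroup (Fin n) ℂ) :
    (∃ L R : Matrix (Fin n) (Fin n) ℂ,
      L ∈ Matrix.unitaryGroup (Fin n) ℂ ∧ L.IsDiag ∧
      R ∈ Matrix.unitaryGroup (Fin n) ℂ ∧ R.IsDiag ∧
      (∀ i, ∑ j, (L * U * R) i j = 1) ∧ (∀ j, ∑ i, (L * U * R) i j = 1)) ↔
    (∃ φ : Fin n → ℂ, (∀ i, ‖φ i‖ = 1) ∧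
      (∀ i, ‖U.mulVec φ i‖ = 1)) := by
  constructor
  · rintro ⟨L, R, hL, hLd, hR, hRd, hrow, -⟩
    obtain ⟨a, rfl⟩ : ∃ a, diagonal a = L := ⟨_, (isDiag_iff_diagonal_diag L).mp hLd⟩
    obtain ⟨φ, rfl⟩ : ∃ φ, diagonal φ = R := ⟨_, (isDiag_iff_diagonal_diag R).mp hRd⟩
    rw [diagonal_mem_unitaryGroup_iff] at hL hR
    refine ⟨φ, hR, fun i => ?_⟩
    have hrow_norm := congrArg norm (hrow i)
    rwa [sum_diagonal_mul_mul_diagonal_row, norm_mul, hL, one_mul, norm_one] at hrow_norm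
  · rintro ⟨φ, hφ, hUφ⟩
    refine ⟨diagonal (star (U *ᵥ φ)), diagonal φ,
      diagonal_mem_unitaryGroup_iff.mpr fun i => (norm_star _).trans (hUφ i),
      isDiag_diagonal _, diagonal_mem_unitaryGroup_iff.mpr hφ, isDiag_diagonal _,
      fun i => ?_, fun j => ?_⟩
    · rw [sum_diagonal_mul_mul_diagonal_row]
      exact RCLike.star_mul_self_eq_one_iff.mpr (hUφ i)
    · rw [sum_diagonal_mul_mul_diagonal_col, star_mulVec_vecMul_of_mem_unitaryGroup hU]
      exact RCLike.star_mul_self_eq_one_iff.mpr (hφ j)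
end

section
/- For every real φ, the 4×4 matrix A(φ) with rows (1/2)·[(1, −i e^{iφ}, 1, i e^{iφ}); (e^{−iφ}, 1, −e^{−iφ}, 1); (1, i e^{iφ}, 1, −i e^{iφ}); (−e^{−iφ}, 1, e^{−iφ}, 1)] is unitary and has all row sums and all column sums equal to 1. -/
open Matrix Complex

/-- The matrix `A(φ)` from the counterexample to uniqueness. -/
noncomputable def Aphi (φ : ℝ) : Matrix (Fin 4) (Fin 4) ℂ :=
  (1 / 2 : ℂ) • !![1, -I * exp (I * φ), 1, I * exp (I * φ);
                   exp (-(I * φ)), 1, -exp (-(I * φ)), 1;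
                   1, I * exp (I * φ), 1, -I * exp (I * φ);
                   -exp (-(I * φ)), 1, exp (-(I * φ)), 1]

theorem stmt_17 (φ : ℝ) :
    Aphi φ ∈ Matrix.unitaryGroup (Fin 4) ℂ ∧
    (∀ i, ∑ j, Aphi φ i j = 1) ∧ (∀ j, ∑ i, Aphi φ i j = 1) := by
  have h1 : exp (I * φ) * exp (-(I * φ)) = 1 := by
    rw [← Complex.exp_add]; simp
  have h1' : exp (-(I * φ)) * exp (I * φ) = 1 := by rw [mul_comm]; exact h1
  have h2 : (starRingEnd ℂ) (exp (I * φ)) = exp (-(I * φ)) := by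
    rw [← Complex.exp_conj, _root_.map_mul, Complex.conj_I, Complex.conj_ofReal, neg_mul]
  have h3 : (starRingEnd ℂ) (exp (-(I * φ))) = exp (I * φ) := by
    rw [← Complex.exp_conj, map_neg, _root_.map_mul, Complex.conj_I, Complex.conj_ofReal,
      neg_mul, neg_neg]
  refine ⟨?_, ?_, ?_⟩
  · rw [Matrix.mem_unitaryGroup_iff]
    ext i j
    fin_cases i <;> fin_cases j <;>
      simp [Aphi, Matrix.mul_apply, Fin.sum_univ_four, Matrix.star_apply,
        h2, h3, Complex.conj_ofNat] <;>
      ring_nf <;> simp [h1, h1', mul_comm] <;> ring_nf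
  · intro i
    fin_cases i <;> simp [Aphi, Fin.sum_univ_four] <;> ring
  · intro j
    fin_cases j <;> simp [Aphi, Fin.sum_univ_four] <;> ring_nf
end
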